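/- Let G and H be graphs with γ_I(H) = 2, and let v ∈ V(H). If H ≅ K_2 then γ_I(G∘_v H) = n(G) + γ(G); if H ≅ the complement of K_2 (two isolated vertices) then γ_I(G∘_v H) = n(G) + γ_I(G); and if H is isomorphic to neither of these two graphs then γ_I(G∘_v H) = 2·n(G). -/

import Mathlib

open Finset

open scoped Classical

/-- An Italian dominating function on a finite simple graph: values in {0,1,2} and
every vertex with value 0 has neighbour values summing to at least 2. -/
noncomputable def IsIDF {α : Type*} [Fintype α] (G : SimpleGraph α) (f : α → ℕ) : Prop :=
  (∀ u, f u ≤ 2) ∧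
    ∀ u, f u = 0 → 2 ≤ ∑ w ∈ Finset.univ.filter (fun w => G.Adj u w), f w

/-- The Italian domination number γ_I(G). -/
noncomputable def italianNumber {α : Type*} [Fintype α] (G : SimpleGraph α) : ℕ :=
  sInf {n | ∃ f : α → ℕ, IsIDF G f ∧ ∑ u, f u = n}

/-- A γ_I(G)-function: an IDF on G of minimum weight. -/
noncomputable def IsMinIDF {α : Type*} [Fintype α] (G : SimpleGraph α) (f : α → ℕ) : Prop :=
  IsIDF G f ∧ ∑ u, f u = italianNumber G

/-- D is a dominating set of G. -/
def IsDomSet {α : Type*} (G : SimpleGraph α) (D : Set α) : Prop :=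
  ∀ u ∉ D, ∃ w ∈ D, G.Adj u w

/-- The domination number γ(G). -/
noncomputable def dominationNumber {α : Type*} [Fintype α] (G : SimpleGraph α) : ℕ :=
  sInf {n | ∃ D : Finset α, IsDomSet G ↑D ∧ D.card = n}

/-- The degree of a vertex. -/
noncomputable def deg {α : Type*} [Fintype α] (G : SimpleGraph α) (u : α) : ℕ :=
  (Finset.univ.filter (fun w => G.Adj u w)).card

/-- The rooted product G∘_v H: one copy of H for each vertex of G, the root v of the
x-th copy being identified with the vertex x of G. The pair (x, y) is the vertex y of
the x-th copy of H; in particular (x, v) is the vertex x of G. -/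
def rootedProd {α β : Type*} (G : SimpleGraph α) (H : SimpleGraph β) (v : β) :
    SimpleGraph (α × β) where
  Adj p q := (p.1 = q.1 ∧ H.Adj p.2 q.2) ∨ (p.2 = v ∧ q.2 = v ∧ G.Adj p.1 q.1)
  symm := ⟨by
    rintro ⟨x, y⟩ ⟨x', y'⟩ (⟨h1, h2⟩ | ⟨h1, h2, h3⟩)
    · exact Or.inl ⟨h1.symm, h2.symm⟩
    · exact Or.inr ⟨h2, h1, h3.symm⟩⟩
  loopless := ⟨by
    rintro ⟨x, y⟩ (⟨_, h⟩ | ⟨_, _, h⟩)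
    · exact H.loopless.irrefl _ h
    · exact G.loopless.irrefl _ h⟩

/-- The weight ω(f_x) of the restriction of f to the copy H_x. -/
def copyWeight {α β : Type*} [Fintype β] (f : α × β → ℕ) (x : α) : ℕ :=
  ∑ y, f (x, y)

/-- The graph H − {v} obtained from H by deleting the vertex v. -/
def deleteVertex {β : Type*} (H : SimpleGraph β) (v : β) : SimpleGraph {w : β // w ≠ v} :=
  SimpleGraph.induce {w : β | w ≠ v} H

/-!
In an IDF of `G ∘_v H` every copy of `H` has weight at least `min 2 (n(H) - 1)`: a copy of
weight at most one cannot supply two units to a non-root vertex of value zero, so all its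
`n(H) - 1` non-root vertices are positive. Copying a γ_I(H)-function into every copy gives
`γ_I(G ∘_v H) ≤ 2 n(G)`, which settles the case `n(H) ≥ 3`. Otherwise `n(H) = 2` (as
`γ_I(H) ≤ n(H)`) and `H` is `K₂` or its complement. If `H` is edgeless, the non-root vertex of
each copy is isolated and the roots carry an IDF of `G`. If `H = K₂`, a positive root forces
weight two on its copy, and a root of value zero in a copy of weight one needs a positive root
among its `G`-neighbours; hence the copies of weight two index a dominating set of `G`.
-/

section Italian

variable {α : Type*} [Fintype α] (G : SimpleGraph α)

lemma isIDF_one : IsIDF G 1 :=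
  ⟨fun _ => one_le_two, fun _ h => absurd h one_ne_zero⟩

lemma italianNumber_le {f : α → ℕ} (hf : IsIDF G f) : italianNumber G ≤ ∑ u, f u :=
  Nat.sInf_le ⟨f, hf, rfl⟩

lemma exists_isMinIDF : ∃ f, IsMinIDF G f :=
  Nat.sInf_mem (s := {n | ∃ f : α → ℕ, IsIDF G f ∧ ∑ u, f u = n})
    ⟨_, 1, isIDF_one G, rfl⟩

lemma italianNumber_le_card : italianNumber G ≤ Fintype.card α := by
  simpa using italianNumber_le G (isIDF_one G)

lemma dominationNumber_le {D : Finset α} (hD : IsDomSet G D) : dominationNumber G ≤ #D :=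
  Nat.sInf_le ⟨D, hD, rfl⟩

lemma exists_isDomSet_card_eq_dominationNumber :
    ∃ D : Finset α, IsDomSet G D ∧ #D = dominationNumber G :=
  Nat.sInf_mem (s := {n | ∃ D : Finset α, IsDomSet G ↑D ∧ #D = n})
    ⟨_, univ, fun u hu => absurd (mem_univ u) hu, rfl⟩

end Italian

section RootedProduct

variable {α β : Type*} [Fintype β]

lemma copyWeight_eq_add_sum_erase (f : α × β → ℕ) (x : α) (v : β) :
    copyWeight f x = f (x, v) + ∑ y ∈ univ.erase v, f (x, y) :=
  (add_sum_erase _ _ (mem_univ v)).symm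

variable [Fintype α] {G : SimpleGraph α} {H : SimpleGraph β} {v : β}

lemma sum_eq_sum_copyWeight (f : α × β → ℕ) : ∑ p, f p = ∑ x, copyWeight f x :=
  Fintype.sum_prod_type f

lemma sum_adj_rootedProd_of_ne (f : α × β → ℕ) (x : α) {y : β} (hy : y ≠ v) :
    ∑ p ∈ univ.filter (fun p => (rootedProd G H v).Adj (x, y) p), f p
      = ∑ y' ∈ univ.filter (fun y' => H.Adj y y'), f (x, y') := by
  have hnbr : univ.filter (fun p => (rootedProd G H v).Adj (x, y) p)
      = (univ.filter (fun y' => H.Adj y y')).map (Function.Embedding.sectR x β) := by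
    ext ⟨x', y'⟩
    simp [rootedProd, hy.symm, and_comm, eq_comm]
  rw [hnbr, sum_map]
  rfl

lemma sum_adj_rootedProd_root (f : α × β → ℕ) (x : α) :
    ∑ p ∈ univ.filter (fun p => (rootedProd G H v).Adj (x, v) p), f p
      = ∑ y ∈ univ.filter (fun y => H.Adj v y), f (x, y)
        + ∑ x' ∈ univ.filter (fun x' => G.Adj x x'), f (x', v) := by
  have hnbr : univ.filter (fun p => (rootedProd G H v).Adj (x, v) p)
      = (univ.filter (fun y => H.Adj v y)).map (Function.Embedding.sectR x β)
        ∪ (univ.filter (fun x' => G.Adj x x')).map (Function.Embedding.sectL α v) := by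
    ext ⟨x', y'⟩
    simp only [rootedProd, mem_union, mem_map, mem_filter, mem_univ, true_and,
      Function.Embedding.sectR_apply, Function.Embedding.sectL_apply, Prod.mk.injEq]
    aesop
  have hdisj : Disjoint ((univ.filter (fun y => H.Adj v y)).map (Function.Embedding.sectR x β))
      ((univ.filter (fun x' => G.Adj x x')).map (Function.Embedding.sectL α v)) := by
    simp only [disjoint_left, mem_map, mem_filter, mem_univ, true_and]
    rintro _ ⟨y, hy, rfl⟩ ⟨x', -, hx'⟩
    obtain rfl : v = y := congrArg Prod.snd hx'
    exact H.irrefl hy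
  rw [hnbr, sum_union hdisj, sum_map, sum_map]
  rfl

lemma isIDF_rootedProd_comp_snd {h : β → ℕ} (hh : IsIDF H h) :
    IsIDF (rootedProd G H v) (h ∘ Prod.snd) := by
  refine ⟨fun p => hh.1 p.2, ?_⟩
  rintro ⟨x, y⟩ h0
  have hcopy := hh.2 y h0
  by_cases hy : y = v
  · subst hy
    rw [sum_adj_rootedProd_root]
    exact le_add_right hcopy
  · rw [sum_adj_rootedProd_of_ne _ x hy]
    exact hcopy

lemma italianNumber_rootedProd_le_mul :
    italianNumber (rootedProd G H v) ≤ Fintype.card α * italianNumber H := by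
  obtain ⟨h, hh, hweight⟩ := exists_isMinIDF H
  calc italianNumber (rootedProd G H v) ≤ ∑ p, (h ∘ Prod.snd) p :=
        italianNumber_le _ (isIDF_rootedProd_comp_snd hh)
    _ = Fintype.card α * italianNumber H := by
        simp [Fintype.sum_prod_type, hweight]

lemma IsIDF.min_le_copyWeight {f : α × β → ℕ} (hf : IsIDF (rootedProd G H v) f) (x : α) :
    min 2 (Fintype.card β - 1) ≤ copyWeight f x := by
  by_contra! hlight
  have hpos : ∀ y ∈ univ.erase v, 1 ≤ f (x, y) := by
    intro y hy
    by_contra! h0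
    have hnbr := hf.2 (x, y) (by omega)
    rw [sum_adj_rootedProd_of_ne f x (ne_of_mem_erase hy)] at hnbr
    have : ∑ y' ∈ univ.filter (fun y' => H.Adj y y'), f (x, y') ≤ copyWeight f x :=
      sum_le_sum_of_subset (filter_subset _ _)
    omega
  have : Fintype.card β - 1 ≤ copyWeight f x :=
    calc Fintype.card β - 1 = #(univ.erase v) := by rw [card_erase_of_mem (mem_univ v), card_univ]
      _ ≤ ∑ y ∈ univ.erase v, f (x, y) := by simpa using card_nsmul_le_sum _ _ 1 hpos
      _ ≤ copyWeight f x := by rw [copyWeight_eq_add_sum_erase f x v]; exact le_add_self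
  omega

lemma mul_min_le_italianNumber_rootedProd :
    Fintype.card α * min 2 (Fintype.card β - 1) ≤ italianNumber (rootedProd G H v) := by
  obtain ⟨f, hf, hweight⟩ := exists_isMinIDF (rootedProd G H v)
  rw [← hweight, sum_eq_sum_copyWeight]
  simpa using card_nsmul_le_sum univ _ _ fun x _ => hf.min_le_copyWeight x

lemma italianNumber_rootedProd_bot :
    italianNumber (rootedProd G (⊥ : SimpleGraph β) v)
      = Fintype.card α * (Fintype.card β - 1) + italianNumber G := by
  apply le_antisymm
  · obtain ⟨g, hg, hweight⟩ := exists_isMinIDF G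
    let f : α × β → ℕ := fun p => if p.2 = v then g p.1 else 1
    have hf : IsIDF (rootedProd G ⊥ v) f := by
      refine ⟨fun p => ?_, ?_⟩
      · by_cases hp : p.2 = v <;> simp [f, hp, hg.1 p.1]
      rintro ⟨x, y⟩ h0
      obtain rfl : v = y := by by_contra hy; simp [f, Ne.symm hy] at h0
      rw [sum_adj_rootedProd_root]
      simpa [f] using hg.2 x (by simpa [f] using h0)
    have hcopy (x : α) : copyWeight f x = g x + (Fintype.card β - 1) := by
      rw [copyWeight_eq_add_sum_erase f x v,
        sum_congr rfl fun y hy => if_neg (ne_of_mem_erase hy)]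
      simp [f, card_erase_of_mem]
    calc italianNumber (rootedProd G ⊥ v) ≤ ∑ p, f p := italianNumber_le _ hf
      _ = Fintype.card α * (Fintype.card β - 1) + italianNumber G := by
        simp [sum_eq_sum_copyWeight, hcopy, sum_add_distrib, hweight, add_comm]
  · obtain ⟨f, hf, hweight⟩ := exists_isMinIDF (rootedProd G ⊥ v)
    have hroot : IsIDF G (fun x => f (x, v)) :=
      ⟨fun x => hf.1 _, fun x h0 => by
        simpa [sum_adj_rootedProd_root] using hf.2 (x, v) h0⟩
    have hisolated (x : α) : ∀ y ∈ univ.erase v, 1 ≤ f (x, y) := by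
      intro y hy
      by_contra! h0
      have := hf.2 (x, y) (by omega)
      simp [sum_adj_rootedProd_of_ne f x (ne_of_mem_erase hy)] at this
    calc Fintype.card α * (Fintype.card β - 1) + italianNumber G
        ≤ ∑ x, ((Fintype.card β - 1) + f (x, v)) := by
          simpa [sum_add_distrib] using italianNumber_le G hroot
      _ ≤ ∑ x, copyWeight f x := sum_le_sum fun x _ => by
          rw [copyWeight_eq_add_sum_erase f x v, add_comm]
          gcongr
          simpa [card_erase_of_mem] using card_nsmul_le_sum _ _ 1 (hisolated x)
      _ = italianNumber (rootedProd G ⊥ v) := by rw [← sum_eq_sum_copyWeight, hweight]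

lemma exists_erase_univ_eq_singleton (hβ : Fintype.card β = 2) (v : β) :
    ∃ w, univ.erase v = {w} ∧ univ.erase w = {v} := by
  have hcard (y : β) : #(univ.erase y) = 1 := by
    rw [card_erase_of_mem (mem_univ y), card_univ, hβ]
  obtain ⟨w, hw⟩ := card_eq_one.mp (hcard v)
  obtain ⟨u, hu⟩ := card_eq_one.mp (hcard w)
  have hwv : w ≠ v := ne_of_mem_erase (hw ▸ mem_singleton_self w)
  have hvu : v = u := mem_singleton.mp (hu ▸ mem_erase.mpr ⟨hwv.symm, mem_univ v⟩)
  exact ⟨w, hw, hvu ▸ hu⟩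

-- Stated for `H = ⊤` rather than for `⊤` itself, so that the filter carries the same classical
-- decidability instance as the neighbourhood sums of `rootedProd G H v` and can be rewritten there.
lemma filter_adj_eq_erase_of_eq_top (hH : H = ⊤) (y : β) :
    univ.filter (fun y' => H.Adj y y') = univ.erase y := by
  subst hH
  ext
  simp [eq_comm]

lemma italianNumber_rootedProd_le_of_eq_top (hH : H = ⊤) (hβ : Fintype.card β = 2) :
    italianNumber (rootedProd G H v) ≤ Fintype.card α + dominationNumber G := by
  obtain ⟨w, hw, -⟩ := exists_erase_univ_eq_singleton hβ v
  have hwv : w ≠ v := ne_of_mem_erase (hw ▸ mem_singleton_self w)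
  obtain ⟨D, hD, hcard⟩ := exists_isDomSet_card_eq_dominationNumber G
  let f : α × β → ℕ := fun p => if p.2 = v ∧ p.1 ∉ D then 0 else 1
  have hf : IsIDF (rootedProd G H v) f := by
    refine ⟨fun p => by simp only [f]; split_ifs <;> omega, ?_⟩
    rintro ⟨x, y⟩ h0
    obtain ⟨rfl, hx⟩ : v = y ∧ x ∉ D := by
      by_contra h
      simp [f, eq_comm, h] at h0
    obtain ⟨x', hx'D, hxx'⟩ := hD x hx
    have hfx' : f (x', v) = 1 := by simp [f, mem_coe.mp hx'D]
    have hx' : 1 ≤ ∑ x'' ∈ univ.filter (fun x'' => G.Adj x x''), f (x'', v) :=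
      hfx' ▸ single_le_sum (f := fun x'' => f (x'', v)) (fun _ _ => Nat.zero_le _)
        (by simpa using hxx')
    rw [sum_adj_rootedProd_root, filter_adj_eq_erase_of_eq_top hH, hw, sum_singleton]
    simp only [f, hwv, false_and, if_false] at hx' ⊢
    omega
  have hcopy (x : α) : copyWeight f x = 1 + if x ∈ D then 1 else 0 := by
    rw [copyWeight_eq_add_sum_erase f x v, hw, sum_singleton]
    by_cases hx : x ∈ D <;> simp [f, hwv, hx]
  calc italianNumber (rootedProd G H v) ≤ ∑ p, f p := italianNumber_le _ hf
    _ = Fintype.card α + dominationNumber G := by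
      simp [sum_eq_sum_copyWeight, hcopy, sum_add_distrib, hcard]

lemma card_add_dominationNumber_le_of_eq_top (hH : H = ⊤) (hβ : Fintype.card β = 2) :
    Fintype.card α + dominationNumber G ≤ italianNumber (rootedProd G H v) := by
  obtain ⟨w, hw, hw'⟩ := exists_erase_univ_eq_singleton hβ v
  have hwv : w ≠ v := ne_of_mem_erase (hw ▸ mem_singleton_self w)
  obtain ⟨f, hf, hweight⟩ := exists_isMinIDF (rootedProd G H v)
  have hcopy (x : α) : copyWeight f x = f (x, v) + f (x, w) := by
    rw [copyWeight_eq_add_sum_erase f x v, hw, sum_singleton]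
  -- if `f (x, w) = 0`, the leaf `(x, w)` is dominated by its only neighbour `(x, v)` alone
  have hheavy (x : α) (hx : f (x, v) ≠ 0) : 2 ≤ copyWeight f x := by
    have hleaf := hf.2 (x, w)
    rw [sum_adj_rootedProd_of_ne f x hwv, filter_adj_eq_erase_of_eq_top hH, hw',
      sum_singleton] at hleaf
    rw [hcopy]
    omega
  let D := univ.filter (fun x => 2 ≤ copyWeight f x)
  have hD : IsDomSet G D := by
    intro x hx
    have hlight : copyWeight f x < 2 := by simpa [D] using hx
    have hx0 : f (x, v) = 0 := by
      by_contra h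
      exact absurd (hheavy x h) (by omega)
    have hroot := hf.2 (x, v) hx0
    rw [sum_adj_rootedProd_root, filter_adj_eq_erase_of_eq_top hH, hw, sum_singleton] at hroot
    have hnbr : ∑ x' ∈ univ.filter (fun x' => G.Adj x x'), f (x', v) ≠ 0 := by
      rw [hcopy] at hlight
      omega
    obtain ⟨x', hxx', hx'⟩ := exists_ne_zero_of_sum_ne_zero hnbr
    exact ⟨x', by simpa [D] using hheavy x' hx', by simpa using hxx'⟩
  have hone (x : α) : 1 ≤ copyWeight f x := by simpa [hβ] using hf.min_le_copyWeight x
  calc Fintype.card α + dominationNumber G ≤ Fintype.card α + #D := by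
        gcongr
        exact dominationNumber_le G hD
    _ = ∑ x, (1 + if x ∈ D then 1 else 0) := by simp [sum_add_distrib]
    _ ≤ ∑ x, copyWeight f x := sum_le_sum fun x _ => by
        split_ifs with hx
        · simpa [D] using hx
        · simpa using hone x
    _ = italianNumber (rootedProd G H v) := by rw [← sum_eq_sum_copyWeight, hweight]

lemma italianNumber_rootedProd_of_eq_top (hH : H = ⊤) (hβ : Fintype.card β = 2) :
    italianNumber (rootedProd G H v) = Fintype.card α + dominationNumber G :=
  le_antisymm (italianNumber_rootedProd_le_of_eq_top hH hβ)
    (card_add_dominationNumber_le_of_eq_top hH hβ)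

end RootedProduct

section TwoVertices

variable {β γ : Type*} {H : SimpleGraph β}

lemma SimpleGraph.Iso.eq_top (e : H ≃g (⊤ : SimpleGraph γ)) : H = ⊤ := by
  ext a b
  rw [← e.map_adj_iff]
  simp [e.injective.ne_iff]

lemma SimpleGraph.Iso.eq_bot (e : H ≃g (⊥ : SimpleGraph γ)) : H = ⊥ := by
  ext a b
  rw [← e.map_adj_iff]
  simp

variable [Fintype β]

lemma eq_top_or_eq_bot_of_card_eq_two (hβ : Fintype.card β = 2) (H : SimpleGraph β) :
    H = ⊤ ∨ H = ⊥ := by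
  by_cases hedge : ∃ a b, H.Adj a b
  · obtain ⟨a, b, hab⟩ := hedge
    have hpair : ({a, b} : Finset β) = univ := eq_univ_of_card _ (by rw [card_pair hab.ne, hβ])
    have hall (y : β) : y = a ∨ y = b := by
      have hy : y ∈ ({a, b} : Finset β) := hpair ▸ mem_univ y
      simpa using hy
    left
    ext x y
    refine ⟨SimpleGraph.Adj.ne, fun hxy => ?_⟩
    rcases hall x with rfl | rfl <;> rcases hall y with rfl | rfl
    exacts [(hxy rfl).elim, hab, hab.symm, (hxy rfl).elim]
  · push Not at hedge
    exact Or.inr (by ext x y; simpa using hedge x y)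

lemma nonempty_iso_top_or_bot_of_card_eq_two (hβ : Fintype.card β = 2) (H : SimpleGraph β) :
    Nonempty (H ≃g (⊤ : SimpleGraph (Fin 2))) ∨
      Nonempty (H ≃g (⊥ : SimpleGraph (Fin 2))) := by
  let q := Fintype.equivFinOfCardEq hβ
  rcases eq_top_or_eq_bot_of_card_eq_two hβ H with rfl | rfl
  · exact Or.inl ⟨SimpleGraph.Iso.completeGraph q⟩
  · exact Or.inr ⟨⟨q, by simp⟩⟩

end TwoVertices

theorem stmt9_general {α β : Type*} [Fintype α] [Fintype β]
    (G : SimpleGraph α) (H : SimpleGraph β) (v : β) (h2 : italianNumber H = 2) :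
    (Nonempty (H ≃g (⊤ : SimpleGraph (Fin 2))) →
      italianNumber (rootedProd G H v) = Fintype.card α + dominationNumber G) ∧
    (Nonempty (H ≃g (⊥ : SimpleGraph (Fin 2))) →
      italianNumber (rootedProd G H v) = Fintype.card α + italianNumber G) ∧
    (¬ Nonempty (H ≃g (⊤ : SimpleGraph (Fin 2))) →
      ¬ Nonempty (H ≃g (⊥ : SimpleGraph (Fin 2))) →
      italianNumber (rootedProd G H v) = 2 * Fintype.card α) := by
  refine ⟨fun ⟨e⟩ => ?_, fun ⟨e⟩ => ?_, fun hT hB => ?_⟩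
  · exact italianNumber_rootedProd_of_eq_top e.eq_top (by simpa using e.card_eq)
  · have hβ : Fintype.card β = 2 := by simpa using e.card_eq
    obtain rfl := e.eq_bot
    simpa [hβ] using italianNumber_rootedProd_bot (G := G) (v := v)
  · have hβ : 3 ≤ Fintype.card β := by
      have hle : 2 ≤ Fintype.card β := h2 ▸ italianNumber_le_card H
      by_contra! hlt
      exact (nonempty_iso_top_or_bot_of_card_eq_two (by omega) H).elim hT hB
    apply le_antisymm
    · simpa [h2, mul_comm] using italianNumber_rootedProd_le_mul (G := G) (H := H) (v := v)
    · simpa [min_eq_left (by omega : 2 ≤ Fintype.card β - 1), mul_comm] using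
        mul_min_le_italianNumber_rootedProd (G := G) (H := H) (v := v)

/-- Theorem, the case γ_I(H) = 2: if γ_I(H) = 2 then
γ_I(G∘_v H) = n(G)+γ(G) if H ≅ K_2, γ_I(G∘_v H) = n(G)+γ_I(G) if H ≅ complement of K_2,
and γ_I(G∘_v H) = 2n(G) otherwise. -/
theorem stmt9 {α β : Type*} [Fintype α] [Nonempty α] [Fintype β]
    (G : SimpleGraph α) (H : SimpleGraph β) (v : β) (h2 : italianNumber H = 2) :
    (Nonempty (H ≃g (⊤ : SimpleGraph (Fin 2))) →
      italianNumber (rootedProd G H v) = Fintype.card α + dominationNumber G) ∧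
    (Nonempty (H ≃g (⊥ : SimpleGraph (Fin 2))) →
      italianNumber (rootedProd G H v) = Fintype.card α + italianNumber G) ∧
    (¬ Nonempty (H ≃g (⊤ : SimpleGraph (Fin 2))) →
      ¬ Nonempty (H ≃g (⊥ : SimpleGraph (Fin 2))) →
      italianNumber (rootedProd G H v) = 2 * Fintype.card α) :=
  stmt9_general G H v h2
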